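/- Let p ∈ (1/2, 1), q = 1 − p, α*, β* ∈ (0,1), and weights π0, π1 > 0 with π0 + π1 = 1. For (ψ0, ψ1) ∈ [0,1]² define p̃ = (1−ψ0−ψ1)·p + ψ0, q̃ = (1−ψ0−ψ1)·q + ψ0, H(x,y) = x·ln(x/y) + (1−x)·ln((1−x)/(1−y)), g0(ψ0,ψ1) = ln(1/β*)·[1/((1−2q̃)·ln(p̃/(1−p̃))) − 1/H(q̃,p̃)], g1(ψ0,ψ1) = ln(1/α*)·[1/((2p̃−1)·ln((1−q̃)/q̃)) − 1/H(p̃,q̃)], and g = π0·g0 + π1·g1. Let E ⊆ [0,1)² be a nonempty compact set contained in the region where p̃ > 1/2 and q̃ < 1/2, which is downward closed (if (ψ0′,ψ1′) ≤ (ψ0,ψ1) componentwise and (ψ0,ψ1) ∈ E, then (ψ0′,ψ1′) ∈ E). Let s0 = max{ψ0 : (ψ0,ψ1) ∈ E for some ψ1} and s1 = max{ψ1 : (ψ0,ψ1) ∈ E for some ψ0}. Assume that on E ∩ {ψ1 > ψ0} one has ∂g_i/∂ψ0 < 0 and ∂g_i/∂ψ1 > 0 for i = 0, 1, and on E ∩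 {ψ0 > ψ1} one has ∂g_i/∂ψ0 > 0 and ∂g_i/∂ψ1 < 0 for i = 0, 1. Then the maximum of g over E equals max{ g(s0, 0), g(0, s1) }; moreover this maximum is strictly positive whenever s0 > 0 or s1 > 0. -/

import Mathlib

/-!
Below the diagonal `g` increases in `ψ₀` and decreases in `ψ₁`, so from a feasible point one may
first lower `ψ₁` to `0` and then raise `ψ₀` to `s₀` without decreasing `g`; downward closure keeps
both moves inside `E`. Above the diagonal the same holds with the coordinates exchanged. Without
encryption the eavesdropper runs the fusion center's test, so `g (0, 0) = 0`, and strict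
monotonicity along an axis gives positivity. The sign conditions say nothing on the diagonal or at
the origin; there the continuity of `g` takes over, which holds because Gibbs' inequality keeps
the divergences `H` away from `0`.
-/

open Real Set Function

theorem strictMonoOn_Icc_of_hasDerivAt_pos {φ : ℝ → ℝ} {a b : ℝ}
    (hc : ContinuousOn φ (Icc a b)) (hd : ∀ t ∈ Ioo a b, ∃ d > 0, HasDerivAt φ d t) :
    StrictMonoOn φ (Icc a b) :=
  strictMonoOn_of_deriv_pos (convex_Icc a b) hc fun t ht => by
    rw [interior_Icc] at ht
    obtain ⟨d, hd, hφ⟩ := hd t ht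
    rwa [hφ.deriv]

theorem strictAntiOn_Icc_of_hasDerivAt_neg {φ : ℝ → ℝ} {a b : ℝ}
    (hc : ContinuousOn φ (Icc a b)) (hd : ∀ t ∈ Ioo a b, ∃ d < 0, HasDerivAt φ d t) :
    StrictAntiOn φ (Icc a b) :=
  strictAntiOn_of_deriv_neg (convex_Icc a b) hc fun t ht => by
    rw [interior_Icc] at ht
    obtain ⟨d, hd, hφ⟩ := hd t ht
    rwa [hφ.deriv]

theorem exists_hasDerivAt_pos_add {f₀ f₁ : ℝ → ℝ} {a b t : ℝ} (ha : 0 < a) (hb : 0 < b)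
    (h₀ : ∃ d > 0, HasDerivAt f₀ d t) (h₁ : ∃ d > 0, HasDerivAt f₁ d t) :
    ∃ d > 0, HasDerivAt (fun s => a * f₀ s + b * f₁ s) d t := by
  obtain ⟨d₀, hd₀, hf₀⟩ := h₀
  obtain ⟨d₁, hd₁, hf₁⟩ := h₁
  exact ⟨_, by positivity, (hf₀.const_mul a).add (hf₁.const_mul b)⟩

theorem exists_hasDerivAt_neg_add {f₀ f₁ : ℝ → ℝ} {a b t : ℝ} (ha : 0 < a) (hb : 0 < b)
    (h₀ : ∃ d < 0, HasDerivAt f₀ d t) (h₁ : ∃ d < 0, HasDerivAt f₁ d t) :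
    ∃ d < 0, HasDerivAt (fun s => a * f₀ s + b * f₁ s) d t := by
  obtain ⟨d₀, hd₀, hf₀⟩ := h₀
  obtain ⟨d₁, hd₁, hf₁⟩ := h₁
  exact ⟨_, by nlinarith, (hf₀.const_mul a).add (hf₁.const_mul b)⟩

def IsQuadrantLowerSet (E : Set (ℝ × ℝ)) : Prop :=
  ∀ ψ ∈ E, ∀ ψ' : ℝ × ℝ, 0 ≤ ψ'.1 → 0 ≤ ψ'.2 → ψ'.1 ≤ ψ.1 → ψ'.2 ≤ ψ.2 → ψ' ∈ E

section AxisCorners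

variable {f : ℝ → ℝ → ℝ} {E : Set (ℝ × ℝ)}

theorem mk_zero_mem_of_isGreatest (hE0 : E ⊆ Ici 0 ×ˢ Ici 0) (hE : IsQuadrantLowerSet E)
    {s : ℝ} (hs : IsGreatest {x | ∃ y, (x, y) ∈ E} s) : (s, 0) ∈ E := by
  obtain ⟨y, hy⟩ := hs.1
  exact hE _ hy _ (hE0 hy).1 le_rfl le_rfl (hE0 hy).2

theorem strictAntiOn_slice_of_below_diagonal (hE0 : E ⊆ Ici 0 ×ˢ Ici 0)
    (hE : IsQuadrantLowerSet E) (hf : ContinuousOn (uncurry f) E)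
    (hy : ∀ ψ ∈ E, ψ.2 < ψ.1 → ∃ d < 0, HasDerivAt (f ψ.1) d ψ.2)
    {x y : ℝ} (hxy : (x, y) ∈ E) (hyx : y ≤ x) : StrictAntiOn (f x) (Icc 0 y) := by
  have hmaps : MapsTo (fun t => (x, t)) (Icc 0 y) E := fun t ht =>
    hE _ hxy _ (hE0 hxy).1 ht.1 le_rfl ht.2
  exact strictAntiOn_Icc_of_hasDerivAt_neg (hf.comp (by fun_prop) hmaps) fun t ht =>
    hy _ (hmaps (Ioo_subset_Icc_self ht)) (ht.2.trans_le hyx)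

theorem strictMonoOn_axis_of_below_diagonal (hE : IsQuadrantLowerSet E)
    (hf : ContinuousOn (uncurry f) E)
    (hx : ∀ ψ ∈ E, ψ.2 < ψ.1 → ∃ d > 0, HasDerivAt (fun x => f x ψ.2) d ψ.1)
    {s : ℝ} (hs : (s, 0) ∈ E) : StrictMonoOn (fun x => f x 0) (Icc 0 s) := by
  have hmaps : MapsTo (fun t => (t, (0 : ℝ))) (Icc 0 s) E := fun t ht =>
    hE _ hs _ ht.1 le_rfl ht.2 le_rfl
  exact strictMonoOn_Icc_of_hasDerivAt_pos (hf.comp (by fun_prop) hmaps) fun t ht =>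
    hx _ (hmaps (Ioo_subset_Icc_self ht)) ht.1

theorem apply_le_axis_of_below_diagonal (hE0 : E ⊆ Ici 0 ×ˢ Ici 0)
    (hE : IsQuadrantLowerSet E) (hf : ContinuousOn (uncurry f) E)
    (hbelow : ∀ ψ ∈ E, ψ.2 < ψ.1 → (∃ d > 0, HasDerivAt (fun x => f x ψ.2) d ψ.1) ∧
      (∃ d < 0, HasDerivAt (f ψ.1) d ψ.2))
    {s : ℝ} (hs : IsGreatest {x | ∃ y, (x, y) ∈ E} s) :
    (∀ ψ ∈ E, ψ.2 ≤ ψ.1 → f ψ.1 ψ.2 ≤ f s 0) ∧ (0 < s → f 0 0 < f s 0) := by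
  have hsE := mk_zero_mem_of_isGreatest hE0 hE hs
  have hs0 : 0 ≤ s := (hE0 hsE).1
  have hmono := strictMonoOn_axis_of_below_diagonal hE hf (fun ψ hψ h => (hbelow ψ hψ h).1) hsE
  refine ⟨fun ψ hψ hle => ?_, fun hpos => hmono ⟨le_rfl, hs0⟩ ⟨hs0, le_rfl⟩ hpos⟩
  obtain ⟨hx0, hy0⟩ := hE0 hψ
  have hxs : ψ.1 ≤ s := hs.2 ⟨ψ.2, hψ⟩
  calc f ψ.1 ψ.2 ≤ f ψ.1 0 :=
        (strictAntiOn_slice_of_below_diagonal hE0 hE hf (fun ψ hψ h => (hbelow ψ hψ h).2) hψ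
          hle).antitoneOn ⟨le_rfl, hy0⟩ ⟨hy0, le_rfl⟩ hy0
    _ ≤ f s 0 := hmono.monotoneOn ⟨hx0, hxs⟩ ⟨hs0, le_rfl⟩ hxs

theorem isGreatest_max_axis_of_sign_conditions (hE0 : E ⊆ Ici 0 ×ˢ Ici 0)
    (hE : IsQuadrantLowerSet E) (hf : ContinuousOn (uncurry f) E)
    (hbelow : ∀ ψ ∈ E, ψ.2 < ψ.1 → (∃ d > 0, HasDerivAt (fun x => f x ψ.2) d ψ.1) ∧
      (∃ d < 0, HasDerivAt (f ψ.1) d ψ.2))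
    (habove : ∀ ψ ∈ E, ψ.1 < ψ.2 → (∃ d < 0, HasDerivAt (fun x => f x ψ.2) d ψ.1) ∧
      (∃ d > 0, HasDerivAt (f ψ.1) d ψ.2))
    {s₀ s₁ : ℝ} (hs₀ : IsGreatest {x | ∃ y, (x, y) ∈ E} s₀)
    (hs₁ : IsGreatest {y | ∃ x, (x, y) ∈ E} s₁) :
    IsGreatest {v | ∃ ψ ∈ E, v = f ψ.1 ψ.2} (max (f s₀ 0) (f 0 s₁)) ∧
      ((0 < s₀ ∨ 0 < s₁) → f 0 0 < max (f s₀ 0) (f 0 s₁)) := by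
  have hE0' : Prod.swap ⁻¹' E ⊆ Ici 0 ×ˢ Ici 0 := by
    rw [← preimage_swap_prod]
    exact preimage_mono hE0
  have hE' : IsQuadrantLowerSet (Prod.swap ⁻¹' E) := fun ψ hψ ψ' h₁ h₂ h₃ h₄ =>
    hE _ hψ ψ'.swap h₂ h₁ h₄ h₃
  have hf' : ContinuousOn (uncurry (swap f)) (Prod.swap ⁻¹' E) :=
    hf.comp continuous_swap.continuousOn (mapsTo_preimage _ _)
  obtain ⟨hle₀, hlt₀⟩ := apply_le_axis_of_below_diagonal hE0 hE hf hbelow hs₀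
  obtain ⟨hle₁, hlt₁⟩ := apply_le_axis_of_below_diagonal hE0' hE' hf'
    (fun ψ hψ h => (habove ψ.swap hψ h).symm) hs₁
  refine ⟨⟨?_, fun v ⟨ψ, hψ, hv⟩ => hv ▸ ?_⟩, ?_⟩
  · rcases max_choice (f s₀ 0) (f 0 s₁) with h | h <;> rw [h]
    · exact ⟨_, mk_zero_mem_of_isGreatest hE0 hE hs₀, rfl⟩
    · exact ⟨_, mk_zero_mem_of_isGreatest hE0' hE' hs₁, rfl⟩
  · rcases le_total ψ.2 ψ.1 with h | h
    · exact (hle₀ ψ hψ h).trans (le_max_left _ _)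
    · exact (hle₁ ψ.swap hψ h).trans (le_max_right _ _)
  · rintro (h | h)
    · exact (hlt₀ h).trans_le (le_max_left _ _)
    · exact (hlt₁ h).trans_le (le_max_right _ _)

end AxisCorners

noncomputable def bernoulliKL (x y : ℝ) : ℝ :=
  x * log (x / y) + (1 - x) * log ((1 - x) / (1 - y))

theorem bernoulliKL_pos {x y : ℝ} (hx0 : 0 < x) (hx1 : x < 1) (hy0 : 0 < y) (hy1 : y < 1)
    (hxy : x ≠ y) : 0 < bernoulliKL x y := by
  have h1x : 0 < 1 - x := by linarith
  have h1y : 0 < 1 - y := by linarith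
  have hne : y / x ≠ (1 - y) / (1 - x) := by
    rw [Ne, div_eq_div_iff hx0.ne' h1x.ne']
    intro h
    exact hxy (by linarith)
  have jensen := strictConcaveOn_log_Ioi.2 (mem_Ioi.2 (div_pos hy0 hx0))
    (mem_Ioi.2 (div_pos h1y h1x)) hne hx0 h1x (by ring)
  have hsum : x • (y / x) + (1 - x) • ((1 - y) / (1 - x)) = 1 := by
    simp only [smul_eq_mul]
    field_simp
    ring
  rw [hsum, log_one, smul_eq_mul, smul_eq_mul] at jensen
  rw [bernoulliKL, ← inv_div y, ← inv_div (1 - y), log_inv, log_inv]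
  linarith

theorem bernoulliKL_one_sub_one_sub (x y : ℝ) :
    bernoulliKL (1 - x) (1 - y) = bernoulliKL x y := by
  simp only [bernoulliKL, sub_sub_cancel]
  ring

-- `g₀ = log (1 / β*) * sampleSizeGap p̃ q̃`.
noncomputable def sampleSizeGap (P Q : ℝ) : ℝ :=
  1 / ((1 - 2 * Q) * log (P / (1 - P))) - 1 / bernoulliKL Q P

theorem sampleSizeGap_self_one_sub (P : ℝ) : sampleSizeGap P (1 - P) = 0 := by
  have hKL : bernoulliKL (1 - P) P = (1 - 2 * (1 - P)) * log (P / (1 - P)) := by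
    rw [bernoulliKL, sub_sub_cancel, ← inv_div, log_inv]
    ring
  rw [sampleSizeGap, hKL, sub_self]

theorem continuousAt_sampleSizeGap {P Q : ℝ} (hQ0 : 0 < Q) (hQ : Q < 1 / 2) (hP : 1 / 2 < P)
    (hP1 : P < 1) : ContinuousAt (fun z : ℝ × ℝ => sampleSizeGap z.1 z.2) (P, Q) := by
  have hP0 : 0 < P := by linarith
  have h1P : 0 < 1 - P := by linarith
  have h1Q : 0 < 1 - Q := by linarith
  have hlog : 0 < log (P / (1 - P)) := log_pos ((one_lt_div h1P).2 (by linarith))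
  have hden : (1 - 2 * Q) * log (P / (1 - P)) ≠ 0 := (mul_pos (by linarith) hlog).ne'
  have hKL := (bernoulliKL_pos hQ0 (by linarith) hP0 hP1 (by linarith)).ne'
  unfold sampleSizeGap bernoulliKL at *
  fun_prop (disch := dsimp only; first
    | assumption
    | exact ne_of_gt (by assumption)
    | exact (div_pos (by assumption) (by assumption)).ne')

-- The reading of a bit that is `1` with probability `p` after encryption flips each `0` to `1`
-- with probability `ψ.1` and each `1` to `0` with probability `ψ.2`.
def encryptedProb (p : ℝ) (ψ : ℝ × ℝ) : ℝ := (1 - ψ.1 - ψ.2) * p + ψ.1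

theorem encryptedProb_bounds {p : ℝ} {ψ : ℝ × ℝ} (hp : 1 / 2 < p) (hp1 : p < 1)
    (hψ₁ : 0 ≤ ψ.1) (hψ₂ : 0 ≤ ψ.2) (hP : 1 / 2 < encryptedProb p ψ)
    (hQ : encryptedProb (1 - p) ψ < 1 / 2) :
    encryptedProb p ψ < 1 ∧ 0 < encryptedProb (1 - p) ψ := by
  unfold encryptedProb at *
  have hψ : 0 < 1 - ψ.1 - ψ.2 := by nlinarith
  constructor <;> nlinarith

theorem continuousAt_sampleSizeGap_encryptedProb {p : ℝ} {ψ : ℝ × ℝ} (hp : 1 / 2 < p)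
    (hp1 : p < 1) (hψ₁ : 0 ≤ ψ.1) (hψ₂ : 0 ≤ ψ.2) (hP : 1 / 2 < encryptedProb p ψ)
    (hQ : encryptedProb (1 - p) ψ < 1 / 2) :
    ContinuousAt (fun z => sampleSizeGap (encryptedProb p z) (encryptedProb (1 - p) z)) ψ ∧
      ContinuousAt
        (fun z => sampleSizeGap (1 - encryptedProb (1 - p) z) (1 - encryptedProb p z)) ψ := by
  obtain ⟨hP1, hQ0⟩ := encryptedProb_bounds hp hp1 hψ₁ hψ₂ hP hQ
  have hc : ∀ r, Continuous (encryptedProb r) := fun r => by unfold encryptedProb; fun_prop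
  exact ⟨(continuousAt_sampleSizeGap hQ0 hQ hP hP1).comp
      (f := fun z => (encryptedProb p z, encryptedProb (1 - p) z)) (by fun_prop),
    (continuousAt_sampleSizeGap (by linarith) (by linarith) (by linarith) (by linarith)).comp
      (f := fun z => (1 - encryptedProb (1 - p) z, 1 - encryptedProb p z)) (by fun_prop)⟩

theorem stmt_19_general (p : ℝ) (hp : 1 / 2 < p) (hp1 : p < 1) (q : ℝ) (hq : q = 1 - p)
    (αs βs : ℝ)
    (π0 π1 : ℝ) (hπ0 : 0 < π0) (hπ1 : 0 < π1)
    (H : ℝ → ℝ → ℝ)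
    (hH : ∀ x y, H x y = x * Real.log (x / y) + (1 - x) * Real.log ((1 - x) / (1 - y)))
    (ptf qtf : ℝ → ℝ → ℝ)
    (hptf : ∀ x y, ptf x y = (1 - x - y) * p + x)
    (hqtf : ∀ x y, qtf x y = (1 - x - y) * q + x)
    (g0 g1 g : ℝ → ℝ → ℝ)
    (hg0 : ∀ x y, g0 x y = Real.log (1 / βs) *
      (1 / ((1 - 2 * qtf x y) * Real.log (ptf x y / (1 - ptf x y)))
        - 1 / H (qtf x y) (ptf x y)))
    (hg1 : ∀ x y, g1 x y = Real.log (1 / αs) *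
      (1 / ((2 * ptf x y - 1) * Real.log ((1 - qtf x y) / qtf x y))
        - 1 / H (ptf x y) (qtf x y)))
    (hg : ∀ x y, g x y = π0 * g0 x y + π1 * g1 x y)
    (E : Set (ℝ × ℝ))
    (hEsub : E ⊆ Set.Ico (0 : ℝ) 1 ×ˢ Set.Ico (0 : ℝ) 1)
    (hEreg : ∀ ψ ∈ E, 1 / 2 < ptf ψ.1 ψ.2 ∧ qtf ψ.1 ψ.2 < 1 / 2)
    (hEdc : ∀ ψ ∈ E, ∀ ψ' : ℝ × ℝ, 0 ≤ ψ'.1 → 0 ≤ ψ'.2 →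
      ψ'.1 ≤ ψ.1 → ψ'.2 ≤ ψ.2 → ψ' ∈ E)
    (s0 s1 : ℝ)
    (hs0 : IsGreatest {x : ℝ | ∃ y : ℝ, (x, y) ∈ E} s0)
    (hs1 : IsGreatest {y : ℝ | ∃ x : ℝ, (x, y) ∈ E} s1)
    (hsign1 : ∀ ψ ∈ E, ψ.1 < ψ.2 →
      (∃ d < (0 : ℝ), HasDerivAt (fun x => g0 x ψ.2) d ψ.1) ∧
      (∃ d > (0 : ℝ), HasDerivAt (fun y => g0 ψ.1 y) d ψ.2) ∧
      (∃ d < (0 : ℝ), HasDerivAt (fun x => g1 x ψ.2) d ψ.1) ∧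
      (∃ d > (0 : ℝ), HasDerivAt (fun y => g1 ψ.1 y) d ψ.2))
    (hsign2 : ∀ ψ ∈ E, ψ.2 < ψ.1 →
      (∃ d > (0 : ℝ), HasDerivAt (fun x => g0 x ψ.2) d ψ.1) ∧
      (∃ d < (0 : ℝ), HasDerivAt (fun y => g0 ψ.1 y) d ψ.2) ∧
      (∃ d > (0 : ℝ), HasDerivAt (fun x => g1 x ψ.2) d ψ.1) ∧
      (∃ d < (0 : ℝ), HasDerivAt (fun y => g1 ψ.1 y) d ψ.2)) :
    IsGreatest {v : ℝ | ∃ ψ ∈ E, v = g ψ.1 ψ.2} (max (g s0 0) (g 0 s1)) ∧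
    ((0 < s0 ∨ 0 < s1) → 0 < max (g s0 0) (g 0 s1)) := by
  subst hq
  obtain rfl : H = bernoulliKL := funext₂ hH
  obtain rfl : ptf = fun x y => encryptedProb p (x, y) := funext₂ hptf
  obtain rfl : qtf = fun x y => encryptedProb (1 - p) (x, y) := funext₂ hqtf
  obtain rfl : g = fun x y => π0 * g0 x y + π1 * g1 x y := funext₂ hg
  have hg0' : ∀ x y, g0 x y = log (1 / βs) *
      sampleSizeGap (encryptedProb p (x, y)) (encryptedProb (1 - p) (x, y)) := hg0
  -- `g1` is `g0` for the complemented bits, which exchanges the roles of the two hypotheses.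
  have hg1' : ∀ x y, g1 x y = log (1 / αs) *
      sampleSizeGap (1 - encryptedProb (1 - p) (x, y)) (1 - encryptedProb p (x, y)) := by
    intro x y
    rw [hg1, sampleSizeGap, bernoulliKL_one_sub_one_sub, sub_sub_cancel]
    ring_nf
  have hE0 : E ⊆ Ici 0 ×ˢ Ici 0 := hEsub.trans (prod_mono Ico_subset_Ici_self Ico_subset_Ici_self)
  have hcont : ContinuousOn (uncurry fun x y => π0 * g0 x y + π1 * g1 x y) E := by
    intro ψ hψ
    obtain ⟨h₀, h₁⟩ := continuousAt_sampleSizeGap_encryptedProb hp hp1 (hE0 hψ).1 (hE0 hψ).2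
      (hEreg ψ hψ).1 (hEreg ψ hψ).2
    simp only [hg0', hg1']
    exact ((continuousAt_const.mul (continuousAt_const.mul h₀)).add
      (continuousAt_const.mul (continuousAt_const.mul h₁))).continuousWithinAt
  have hg_zero : π0 * g0 0 0 + π1 * g1 0 0 = 0 := by
    norm_num [hg0', hg1', encryptedProb, sampleSizeGap_self_one_sub]
  obtain ⟨hmax, hpos⟩ := isGreatest_max_axis_of_sign_conditions hE0 hEdc hcont
    (fun ψ hψ h => let ⟨hx₀, hy₀, hx₁, hy₁⟩ := hsign2 ψ hψ h
      ⟨exists_hasDerivAt_pos_add hπ0 hπ1 hx₀ hx₁, exists_hasDerivAt_neg_add hπ0 hπ1 hy₀ hy₁⟩)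
    (fun ψ hψ h => let ⟨hx₀, hy₀, hx₁, hy₁⟩ := hsign1 ψ hψ h
      ⟨exists_hasDerivAt_neg_add hπ0 hπ1 hx₀ hx₁, exists_hasDerivAt_pos_add hπ0 hπ1 hy₀ hy₁⟩)
    hs0 hs1
  exact ⟨hmax, fun h => hg_zero.symm.trans_lt (hpos h)⟩

/-- Theorem 3 of the paper: under the sign conditions (C2) on the partial derivatives
of the objective over the feasible set `E` of encryption parameters (a compact,
downward-closed subset of `[0,1)²` on which `p̃ > 1/2 > q̃`), the maximum of the
weighted objective `g = π0·g0 + π1·g1` over `E` is attained at one of the two axis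
corner points `(s0, 0)` or `(0, s1)`, and it is strictly positive whenever `s0 > 0`
or `s1 > 0`. -/
theorem stmt_19 (p : ℝ) (hp : 1 / 2 < p) (hp1 : p < 1) (q : ℝ) (hq : q = 1 - p)
    (αs βs : ℝ) (hαs : αs ∈ Set.Ioo (0 : ℝ) 1) (hβs : βs ∈ Set.Ioo (0 : ℝ) 1)
    (π0 π1 : ℝ) (hπ0 : 0 < π0) (hπ1 : 0 < π1) (hπ : π0 + π1 = 1)
    (H : ℝ → ℝ → ℝ)
    (hH : ∀ x y, H x y = x * Real.log (x / y) + (1 - x) * Real.log ((1 - x) / (1 - y)))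
    (ptf qtf : ℝ → ℝ → ℝ)
    (hptf : ∀ x y, ptf x y = (1 - x - y) * p + x)
    (hqtf : ∀ x y, qtf x y = (1 - x - y) * q + x)
    (g0 g1 g : ℝ → ℝ → ℝ)
    (hg0 : ∀ x y, g0 x y = Real.log (1 / βs) *
      (1 / ((1 - 2 * qtf x y) * Real.log (ptf x y / (1 - ptf x y)))
        - 1 / H (qtf x y) (ptf x y)))
    (hg1 : ∀ x y, g1 x y = Real.log (1 / αs) *
      (1 / ((2 * ptf x y - 1) * Real.log ((1 - qtf x y) / qtf x y))
        - 1 / H (ptf x y) (qtf x y)))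
    (hg : ∀ x y, g x y = π0 * g0 x y + π1 * g1 x y)
    (E : Set (ℝ × ℝ)) (hEne : E.Nonempty) (hEcpt : IsCompact E)
    (hEsub : E ⊆ Set.Ico (0 : ℝ) 1 ×ˢ Set.Ico (0 : ℝ) 1)
    (hEreg : ∀ ψ ∈ E, 1 / 2 < ptf ψ.1 ψ.2 ∧ qtf ψ.1 ψ.2 < 1 / 2)
    (hEdc : ∀ ψ ∈ E, ∀ ψ' : ℝ × ℝ, 0 ≤ ψ'.1 → 0 ≤ ψ'.2 →
      ψ'.1 ≤ ψ.1 → ψ'.2 ≤ ψ.2 → ψ' ∈ E)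
    (s0 s1 : ℝ)
    (hs0 : IsGreatest {x : ℝ | ∃ y : ℝ, (x, y) ∈ E} s0)
    (hs1 : IsGreatest {y : ℝ | ∃ x : ℝ, (x, y) ∈ E} s1)
    (hsign1 : ∀ ψ ∈ E, ψ.1 < ψ.2 →
      (∃ d < (0 : ℝ), HasDerivAt (fun x => g0 x ψ.2) d ψ.1) ∧
      (∃ d > (0 : ℝ), HasDerivAt (fun y => g0 ψ.1 y) d ψ.2) ∧
      (∃ d < (0 : ℝ), HasDerivAt (fun x => g1 x ψ.2) d ψ.1) ∧
      (∃ d > (0 : ℝ), HasDerivAt (fun y => g1 ψ.1 y) d ψ.2))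
    (hsign2 : ∀ ψ ∈ E, ψ.2 < ψ.1 →
      (∃ d > (0 : ℝ), HasDerivAt (fun x => g0 x ψ.2) d ψ.1) ∧
      (∃ d < (0 : ℝ), HasDerivAt (fun y => g0 ψ.1 y) d ψ.2) ∧
      (∃ d > (0 : ℝ), HasDerivAt (fun x => g1 x ψ.2) d ψ.1) ∧
      (∃ d < (0 : ℝ), HasDerivAt (fun y => g1 ψ.1 y) d ψ.2)) :
    IsGreatest {v : ℝ | ∃ ψ ∈ E, v = g ψ.1 ψ.2} (max (g s0 0) (g 0 s1)) ∧
    ((0 < s0 ∨ 0 < s1) → 0 < max (g s0 0) (g 0 s1)) :=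
  stmt_19_general p hp hp1 q hq αs βs π0 π1 hπ0 hπ1 H hH ptf qtf hptf hqtf g0 g1 g hg0 hg1 hg E
    hEsub hEreg hEdc s0 s1 hs0 hs1 hsign1 hsign2
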